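/- Let x ∈ ℂ^I admit at least one decomposition x = ∑_{ℓ=1}^{L} σ_ℓ a(f_ℓ) with all f_ℓ ∈ F. Call a pair (B, t), with B : ℤ^d → ℂ and t ∈ ℝ, feasible if the (N_D + 1) × (N_D + 1) block matrix [[T(B), x], [xᴴ, t]] is positive semidefinite and T_{g_i}(B) is positive semidefinite for every i = 1,...,d. Then for every decomposition x = ∑_{ℓ=1}^{L} σ_ℓ a(f_ℓ) with f_ℓ ∈ F, the pair given by B(p) = ∑_{ℓ=1}^{L} |σ_ℓ| ∏_{i=1}^{d} e^{2πi p_i f_{i,ℓ}} and t = ∑_{ℓ=1}^{L} |σ_ℓ| is feasible with objective value (1/(2N_D))·Tr(T(B)) + t/2 = ∑_{ℓ=1}^{L} |σ_ℓ|; consequently, the infimum of (1/(2N_D))·Tr(T(B)) + t/2 over all feasible (B, t) is at most ‖x‖_{A(F)}. -/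

import Mathlib

/-!
Write `e_f(p) = ∏ᵢ exp(2πi pᵢ fᵢ)`. Each atom `σ a(f)` contributes the rank-one term
`|σ| a(f) a(f)ᴴ` to `T(B)`, because `B(m - n)` factors as `e_f(m) conj(e_f(n))`. Shifting by
`± eᵢ` multiplies `e_f` by `exp(± 2πi fᵢ)`, so `T_{gᵢ}(B)` is the same sum of rank-one terms
weighted by `gᵢ(e^{2πi fᵢ}) = 2cos(π(2fᵢ - f_{L,i} - f_{H,i})) - 2cos(π(f_{H,i} - f_{L,i}))`,
which is nonnegative because `fᵢ ∈ Fᵢ` and `Fᵢ` has length at most `1`. Writing `σ = |σ| u`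
with `|u| = 1`, the bordered matrix `[[T(B), x], [xᴴ, t]]` is the Gram sum of the vectors
`(a(f), conj u)` weighted by `|σ|`. As `T(B)` has constant diagonal `∑ |σ|`, the objective
equals `∑ |σ|`; feasible objectives are nonnegative, so the infimum is at most every such sum,
hence at most the atomic norm.
-/

open Complex Matrix BigOperators
open scoped ComplexOrder

/-- The multi-dimensional sinusoid `a(f)`, `a(f)(m) = ∏ i, exp(2πi m_i f_i)`. -/
noncomputable def sinusoid {d : ℕ} (N : Fin d → ℕ) (f : Fin d → ℝ) :
    (∀ i, Fin (N i)) → ℂ :=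
  fun m => ∏ i, Complex.exp (2 * (Real.pi : ℂ) * Complex.I * ((m i : ℕ) : ℂ) * ((f i : ℝ) : ℂ))

/-- The `d`-level block Toeplitz matrix `T(B)(m,n) = B(m-n)`. -/
noncomputable def toepT {d : ℕ} (N : Fin d → ℕ) (B : (Fin d → ℤ) → ℂ) :
    Matrix (∀ i, Fin (N i)) (∀ i, Fin (N i)) ℂ :=
  Matrix.of fun m n => B (fun i => (m i : ℤ) - (n i : ℤ))

/-- The filtered matrix `T_{g_i}(B)(m,n) = ∑_{k=-1}^1 r_k B(m-n-k e_i)`,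
with `r_{-1} = conj r_1`, indexed by `Ī = ∏ i {0,…,N_i-2}`. -/
noncomputable def toepTg {d : ℕ} (N : Fin d → ℕ) (i0 : Fin d) (r0 : ℝ) (r1 : ℂ)
    (B : (Fin d → ℤ) → ℂ) :
    Matrix (∀ i, Fin (N i - 1)) (∀ i, Fin (N i - 1)) ℂ :=
  Matrix.of fun m n =>
    (starRingEnd ℂ) r1 * B (fun i => (m i : ℤ) - (n i : ℤ) + (if i = i0 then 1 else 0)) +
    (r0 : ℂ) * B (fun i => (m i : ℤ) - (n i : ℤ)) +
    r1 * B (fun i => (m i : ℤ) - (n i : ℤ) - (if i = i0 then 1 else 0))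

/-- The `(N_D+1) × (N_D+1)` block matrix `[[T(B), x], [xᴴ, t]]`. -/
noncomputable def blockMat {d : ℕ} (N : Fin d → ℕ) (B : (Fin d → ℤ) → ℂ)
    (x : (∀ i, Fin (N i)) → ℂ) (t : ℝ) :
    Matrix ((∀ i, Fin (N i)) ⊕ Unit) ((∀ i, Fin (N i)) ⊕ Unit) ℂ :=
  Matrix.fromBlocks (toepT N B) (Matrix.of fun m _ => x m)
    (Matrix.of fun _ n => (starRingEnd ℂ) (x n)) (Matrix.of fun _ _ => (t : ℂ))

/-- The frequency-selective atomic norm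
`‖x‖_{A(F)} = inf { ∑ |σ_ℓ| : x = ∑ σ_ℓ a(f_ℓ), f_ℓ ∈ F₁ × ⋯ × F_d }`. -/
noncomputable def atomicNorm {d : ℕ} (N : Fin d → ℕ) (F : Fin d → Set ℝ)
    (x : (∀ i, Fin (N i)) → ℂ) : ℝ :=
  sInf { s : ℝ | ∃ (L : ℕ) (σ : Fin L → ℂ) (f : Fin L → Fin d → ℝ),
    (∀ ℓ i, f ℓ i ∈ F i) ∧ (x = ∑ ℓ, σ ℓ • sinusoid N (f ℓ)) ∧
    s = ∑ ℓ, ‖σ ℓ‖ }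

/-- A pair `(B, t)` is feasible if `[[T(B), x], [xᴴ, t]] ⪰ 0` and every
`T_{g_i}(B) ⪰ 0`, for the polynomials `g_i` determined by `[f_{L,i}, f_{H,i}]`. -/
def Feasible {d : ℕ} (N : Fin d → ℕ) (fL fH : Fin d → ℝ)
    (x : (∀ i, Fin (N i)) → ℂ) (B : (Fin d → ℤ) → ℂ) (t : ℝ) : Prop :=
  (blockMat N B x t).PosSemidef ∧
  ∀ i, (toepTg N i (-2 * Real.cos (Real.pi * (fH i - fL i)))
      (Complex.exp ((Real.pi : ℂ) * Complex.I * ((fL i : ℂ) + (fH i : ℂ)))) B).PosSemidef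


open ComplexConjugate

lemma posSemidef_sum_smul_vecMulVec {ι n : Type*} [Fintype ι] [Fintype n] (c : ι → ℝ)
    (hc : ∀ ℓ, 0 ≤ c ℓ) (v : ι → n → ℂ) : (∑ ℓ, c ℓ • vecMulVec (v ℓ) (star (v ℓ))).PosSemidef :=
  posSemidef_sum _ fun ℓ _ => (posSemidef_vecMulVec_self_star (v ℓ)).smul (hc ℓ)

section Characters

variable {d : ℕ}

noncomputable def expChar (f : Fin d → ℝ) (p : Fin d → ℤ) : ℂ :=
  ∏ i, Complex.exp (2 * (Real.pi : ℂ) * Complex.I * ((p i : ℤ) : ℂ) * ((f i : ℝ) : ℂ))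

lemma expChar_zero (f : Fin d → ℝ) : expChar f 0 = 1 := by
  simp [expChar]

lemma expChar_add (f : Fin d → ℝ) (p q : Fin d → ℤ) :
    expChar f (p + q) = expChar f p * expChar f q := by
  rw [expChar, expChar, expChar, ← Finset.prod_mul_distrib]
  refine Finset.prod_congr rfl fun i _ => ?_
  rw [← Complex.exp_add, Pi.add_apply]
  push_cast
  ring_nf

lemma expChar_neg (f : Fin d → ℝ) (p : Fin d → ℤ) :
    expChar f (-p) = conj (expChar f p) := by
  rw [expChar, expChar, map_prod]
  refine Finset.prod_congr rfl fun i _ => ?_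
  rw [← Complex.exp_conj, Pi.neg_apply]
  simp only [map_mul, conj_ofReal, conj_I, map_intCast, map_ofNat]
  push_cast
  ring_nf

lemma expChar_sub (f : Fin d → ℝ) (p q : Fin d → ℤ) :
    expChar f (p - q) = expChar f p * conj (expChar f q) := by
  rw [sub_eq_add_neg, expChar_add, expChar_neg]

lemma expChar_single (f : Fin d → ℝ) (i : Fin d) :
    expChar f (Pi.single i 1) = Complex.exp (2 * (Real.pi : ℂ) * Complex.I * (f i : ℂ)) := by
  rw [expChar, Finset.prod_eq_single i (fun j _ hj => by simp [hj]) (by simp)]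
  simp

lemma sinusoid_eq_expChar (N : Fin d → ℕ) (f : Fin d → ℝ) (m : ∀ i, Fin (N i)) :
    sinusoid N f m = expChar f (fun i => (m i : ℤ)) := by
  simp [sinusoid, expChar]

end Characters

section Toeplitz

variable {d : ℕ} {L : ℕ}

noncomputable def momentSeq (c : Fin L → ℝ) (f : Fin L → Fin d → ℝ) : (Fin d → ℤ) → ℂ :=
  fun p => ∑ ℓ, (c ℓ : ℂ) * expChar (f ℓ) p

/-- `g(e^{2πiφ}) = conj r₁ e^{2πiφ} + r₀ + r₁ e^{-2πiφ}`, real since `r₋₁ = conj r₁`. -/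
noncomputable def filterGain (r0 : ℝ) (r1 : ℂ) (φ : ℝ) : ℝ :=
  r0 + 2 * (conj r1 * Complex.exp (2 * (Real.pi : ℂ) * Complex.I * (φ : ℂ))).re

lemma sinusoid_mul_conj_sinusoid (N : Fin d → ℕ) (f : Fin d → ℝ) (m n : ∀ i, Fin (N i)) :
    sinusoid N f m * conj (sinusoid N f n) = expChar f (fun i => (m i : ℤ) - (n i : ℤ)) := by
  rw [sinusoid_eq_expChar, sinusoid_eq_expChar, ← expChar_sub]
  rfl

lemma toepT_momentSeq (N : Fin d → ℕ) (c : Fin L → ℝ) (f : Fin L → Fin d → ℝ) :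
    toepT N (momentSeq c f) =
      ∑ ℓ, c ℓ • vecMulVec (sinusoid N (f ℓ)) (star (sinusoid N (f ℓ))) := by
  ext m n
  simp only [toepT, momentSeq, of_apply, Matrix.sum_apply, Matrix.smul_apply, vecMulVec_apply,
    Pi.star_apply, RCLike.star_def, sinusoid_mul_conj_sinusoid, Complex.real_smul]

lemma toepTg_momentSeq (N : Fin d → ℕ) (i0 : Fin d) (r0 : ℝ) (r1 : ℂ) (c : Fin L → ℝ)
    (f : Fin L → Fin d → ℝ) :
    toepTg N i0 r0 r1 (momentSeq c f) =
      ∑ ℓ, (c ℓ * filterGain r0 r1 (f ℓ i0)) •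
        vecMulVec (sinusoid (fun i => N i - 1) (f ℓ))
          (star (sinusoid (fun i => N i - 1) (f ℓ))) := by
  ext m n
  have hplus : (fun i => (m i : ℤ) - (n i : ℤ) + if i = i0 then 1 else 0) =
      (fun i => (m i : ℤ) - (n i : ℤ)) + Pi.single i0 1 := by
    ext i; simp [Pi.single_apply]
  have hminus : (fun i => (m i : ℤ) - (n i : ℤ) - if i = i0 then 1 else 0) =
      (fun i => (m i : ℤ) - (n i : ℤ)) - Pi.single i0 1 := by
    ext i; simp [Pi.single_apply]
  simp only [toepTg, momentSeq, of_apply, Matrix.sum_apply, Matrix.smul_apply, vecMulVec_apply,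
    Pi.star_apply, RCLike.star_def, sinusoid_mul_conj_sinusoid, Complex.real_smul, hplus, hminus,
    expChar_add, expChar_sub, expChar_single, Finset.mul_sum, ← Finset.sum_add_distrib]
  refine Finset.sum_congr rfl fun ℓ _ => ?_
  rw [filterGain]
  set z := Complex.exp (2 * (Real.pi : ℂ) * Complex.I * ((f ℓ i0 : ℝ) : ℂ))
  have two_re : ((2 * (conj r1 * z).re : ℝ) : ℂ) = conj r1 * z + r1 * conj z := by
    rw [← Complex.add_conj, map_mul, Complex.conj_conj]
  rw [Complex.ofReal_mul, Complex.ofReal_add, two_re]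
  ring

end Toeplitz

lemma filterGain_bandpass (a b φ : ℝ) :
    filterGain (-2 * Real.cos (Real.pi * (b - a)))
        (Complex.exp ((Real.pi : ℂ) * Complex.I * ((a : ℂ) + (b : ℂ)))) φ =
      2 * Real.cos (Real.pi * (2 * φ - a - b)) - 2 * Real.cos (Real.pi * (b - a)) := by
  have phase : conj (Complex.exp ((Real.pi : ℂ) * Complex.I * ((a : ℂ) + (b : ℂ)))) *
      Complex.exp (2 * (Real.pi : ℂ) * Complex.I * (φ : ℂ)) =
      Complex.exp ((Real.pi * (2 * φ - a - b) : ℝ) * Complex.I) := by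
    rw [← Complex.exp_conj, ← Complex.exp_add]
    simp only [map_mul, map_add, conj_ofReal, conj_I]
    push_cast
    ring_nf
  rw [filterGain, phase, Complex.exp_ofReal_mul_I_re]
  ring

lemma filterGain_bandpass_nonneg {a b φ : ℝ} (ha : a ≤ φ) (hb : φ ≤ b) (hab : b - a ≤ 1) :
    0 ≤ filterGain (-2 * Real.cos (Real.pi * (b - a)))
      (Complex.exp ((Real.pi : ℂ) * Complex.I * ((a : ℂ) + (b : ℂ)))) φ := by
  rw [filterGain_bandpass, sub_nonneg, mul_le_mul_iff_right₀ two_pos,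
    ← Real.cos_abs (Real.pi * (2 * φ - a - b))]
  have hdist : |Real.pi * (2 * φ - a - b)| ≤ Real.pi * (b - a) := by
    rw [abs_mul, abs_of_pos Real.pi_pos]
    exact mul_le_mul_of_nonneg_left (abs_le.mpr ⟨by linarith, by linarith⟩) Real.pi_pos.le
  exact Real.cos_le_cos_of_nonneg_of_le_pi (abs_nonneg _)
    (mul_le_of_le_one_right Real.pi_pos.le hab) hdist

section Objective

variable {d L : ℕ}

lemma blockMat_momentSeq_posSemidef (N : Fin d → ℕ) (σ : Fin L → ℂ) (f : Fin L → Fin d → ℝ) :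
    (blockMat N (momentSeq (fun ℓ => ‖σ ℓ‖) f) (∑ ℓ, σ ℓ • sinusoid N (f ℓ))
      (∑ ℓ, ‖σ ℓ‖)).PosSemidef := by
  set u : Fin L → ℂ := fun ℓ => Complex.exp ((σ ℓ).arg * Complex.I)
  have polar : ∀ ℓ, (‖σ ℓ‖ : ℂ) * u ℓ = σ ℓ := fun ℓ => Complex.norm_mul_exp_arg_mul_I (σ ℓ)
  have unit : ∀ ℓ, conj (u ℓ) * u ℓ = 1 := fun ℓ => by
    rw [Complex.conj_mul', Complex.norm_exp_ofReal_mul_I, Complex.ofReal_one, one_pow]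
  set w : Fin L → (∀ i, Fin (N i)) ⊕ Unit → ℂ :=
    fun ℓ => Sum.elim (sinusoid N (f ℓ)) (fun _ => conj (u ℓ))
  suffices blockMat N (momentSeq (fun ℓ => ‖σ ℓ‖) f) (∑ ℓ, σ ℓ • sinusoid N (f ℓ))
      (∑ ℓ, ‖σ ℓ‖) = ∑ ℓ, ‖σ ℓ‖ • vecMulVec (w ℓ) (star (w ℓ)) by
    rw [this]
    exact posSemidef_sum_smul_vecMulVec _ (fun ℓ => norm_nonneg _) w
  ext (m | _) (n | _) <;>
    simp only [blockMat, toepT_momentSeq, fromBlocks_apply₁₁, fromBlocks_apply₁₂,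
      fromBlocks_apply₂₁, fromBlocks_apply₂₂, of_apply, Matrix.sum_apply, Matrix.smul_apply,
      vecMulVec_apply, Pi.star_apply, RCLike.star_def, Finset.sum_apply, Pi.smul_apply,
      smul_eq_mul, Complex.real_smul, map_sum, map_mul, Complex.conj_conj, w, Sum.elim_inl,
      Sum.elim_inr]
  case inl.inr =>
    exact Finset.sum_congr rfl fun ℓ _ => by
      conv_lhs => rw [← polar ℓ]
      ring
  case inr.inl =>
    exact Finset.sum_congr rfl fun ℓ _ => by
      conv_lhs => rw [← polar ℓ, map_mul, Complex.conj_ofReal]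
      ring
  case inr.inr =>
    rw [Complex.ofReal_sum]
    exact Finset.sum_congr rfl fun ℓ _ => by rw [unit, mul_one]

noncomputable def sdpObjective (N : Fin d → ℕ) (B : (Fin d → ℤ) → ℂ) (t : ℝ) : ℝ :=
  1 / (2 * ((∏ i, N i : ℕ) : ℝ)) * ((toepT N B).trace).re + t / 2

lemma trace_toepT (N : Fin d → ℕ) (B : (Fin d → ℤ) → ℂ) :
    (toepT N B).trace = (∏ i, N i : ℕ) * B 0 := by
  simp [trace, toepT, Fintype.card_pi, Pi.zero_def]

lemma sdpObjective_momentSeq {N : Fin d → ℕ} (hN : ∀ i, N i ≠ 0) (c : Fin L → ℝ)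
    (f : Fin L → Fin d → ℝ) : sdpObjective N (momentSeq c f) (∑ ℓ, c ℓ) = ∑ ℓ, c ℓ := by
  have hND : ((∏ i, N i : ℕ) : ℝ) ≠ 0 := by
    exact_mod_cast Finset.prod_ne_zero_iff.mpr fun i _ => hN i
  simp only [sdpObjective, trace_toepT, momentSeq, expChar_zero, mul_one]
  rw [← Complex.ofReal_sum, ← Complex.ofReal_natCast, ← Complex.ofReal_mul, Complex.ofReal_re]
  field_simp
  ring

lemma sdpObjective_nonneg {N : Fin d → ℕ} {B : (Fin d → ℤ) → ℂ} {x : (∀ i, Fin (N i)) → ℂ}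
    {t : ℝ} (h : (blockMat N B x t).PosSemidef) : 0 ≤ sdpObjective N B t := by
  have htrace : 0 ≤ (toepT N B).trace := by
    exact (h.submatrix Sum.inl).trace_nonneg
  have ht : (0 : ℂ) ≤ t := by
    simpa [blockMat] using h.diag_nonneg (i := Sum.inr ())
  exact add_nonneg (mul_nonneg (by positivity) (Complex.le_def.mp htrace).1)
    (div_nonneg (Complex.zero_le_real.mp ht) zero_le_two)
end Objective

lemma feasible_of_decomposition {d L : ℕ} {N : Fin d → ℕ} {fL fH : Fin d → ℝ}
    (hL0 : ∀ i, 0 ≤ fL i) (hH1 : ∀ i, fH i < 1) (σ : Fin L → ℂ) (f : Fin L → Fin d → ℝ)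
    (hf : ∀ ℓ i, f ℓ i ∈ Set.Icc (fL i) (fH i)) :
    Feasible N fL fH (∑ ℓ, σ ℓ • sinusoid N (f ℓ)) (momentSeq (fun ℓ => ‖σ ℓ‖) f)
      (∑ ℓ, ‖σ ℓ‖) := by
  refine ⟨blockMat_momentSeq_posSemidef N σ f, fun i => ?_⟩
  rw [toepTg_momentSeq]
  refine posSemidef_sum_smul_vecMulVec _ (fun ℓ => mul_nonneg (norm_nonneg _) ?_) _
  exact filterGain_bandpass_nonneg (hf ℓ i).1 (hf ℓ i).2 (by linarith [hL0 i, hH1 i])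

theorem stmt10_general {d : ℕ} (N : Fin d → ℕ) (hN : ∀ i, 2 ≤ N i)
    (fL fH : Fin d → ℝ) (hL0 : ∀ i, 0 ≤ fL i)
    (hH1 : ∀ i, fH i < 1)
    (x : (∀ i, Fin (N i)) → ℂ)
    (hx : ∃ (L : ℕ) (σ : Fin L → ℂ) (f : Fin L → Fin d → ℝ),
      (∀ ℓ i, f ℓ i ∈ Set.Icc (fL i) (fH i)) ∧ x = ∑ ℓ, σ ℓ • sinusoid N (f ℓ)) :
    (∀ (L : ℕ) (σ : Fin L → ℂ) (f : Fin L → Fin d → ℝ),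
      (∀ ℓ i, f ℓ i ∈ Set.Icc (fL i) (fH i)) →
      x = ∑ ℓ, σ ℓ • sinusoid N (f ℓ) →
      Feasible N fL fH x
        (fun p => ∑ ℓ, (‖σ ℓ‖ : ℂ) *
          ∏ i, Complex.exp (2 * (Real.pi : ℂ) * Complex.I * ((p i : ℤ) : ℂ) * ((f ℓ i : ℝ) : ℂ)))
        (∑ ℓ, ‖σ ℓ‖) ∧
      (1 / (2 * ((∏ i, N i : ℕ) : ℝ))) *
          ((toepT N (fun p => ∑ ℓ, (‖σ ℓ‖ : ℂ) *
            ∏ i, Complex.exp (2 * (Real.pi : ℂ) * Complex.I * ((p i : ℤ) : ℂ) *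
              ((f ℓ i : ℝ) : ℂ)))).trace).re
        + (∑ ℓ, ‖σ ℓ‖) / 2 = ∑ ℓ, ‖σ ℓ‖) ∧
    sInf { s : ℝ | ∃ (B : (Fin d → ℤ) → ℂ) (t : ℝ), Feasible N fL fH x B t ∧
        s = (1 / (2 * ((∏ i, N i : ℕ) : ℝ))) * ((toepT N B).trace).re + t / 2 }
      ≤ atomicNorm N (fun i => Set.Icc (fL i) (fH i)) x := by
  have decomposition_feasible : ∀ (L : ℕ) (σ : Fin L → ℂ) (f : Fin L → Fin d → ℝ),
      (∀ ℓ i, f ℓ i ∈ Set.Icc (fL i) (fH i)) → x = ∑ ℓ, σ ℓ • sinusoid N (f ℓ) →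
      Feasible N fL fH x (momentSeq (fun ℓ => ‖σ ℓ‖) f) (∑ ℓ, ‖σ ℓ‖) ∧
        sdpObjective N (momentSeq (fun ℓ => ‖σ ℓ‖) f) (∑ ℓ, ‖σ ℓ‖) = ∑ ℓ, ‖σ ℓ‖ := by
    rintro L σ f hf rfl
    exact ⟨feasible_of_decomposition hL0 hH1 σ f hf,
      sdpObjective_momentSeq (fun i => by have := hN i; omega) _ f⟩
  refine ⟨decomposition_feasible, csInf_le_csInf ⟨0, ?_⟩ ?_ ?_⟩
  · rintro _ ⟨B, t, hBt, rfl⟩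
    exact sdpObjective_nonneg hBt.1
  · obtain ⟨L, σ, f, hf, hxσ⟩ := hx
    exact ⟨_, L, σ, f, hf, hxσ, rfl⟩
  · rintro _ ⟨L, σ, f, hf, hxσ, rfl⟩
    obtain ⟨hfeas, hvalue⟩ := decomposition_feasible L σ f hf hxσ
    exact ⟨_, _, hfeas, hvalue.symm⟩

/-- Every atomic decomposition of `x` on `F` yields a feasible pair `(B, t)` with
objective value `(1/(2N_D)) Tr T(B) + t/2 = ∑ |σ_ℓ|`; consequently the infimum of
the SDP objective over feasible pairs is at most `‖x‖_{A(F)}`. -/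
theorem stmt10 {d : ℕ} (hd : 1 ≤ d) (N : Fin d → ℕ) (hN : ∀ i, 2 ≤ N i)
    (fL fH : Fin d → ℝ) (hL0 : ∀ i, 0 ≤ fL i) (hLH : ∀ i, fL i < fH i)
    (hH1 : ∀ i, fH i < 1)
    (x : (∀ i, Fin (N i)) → ℂ)
    (hx : ∃ (L : ℕ) (σ : Fin L → ℂ) (f : Fin L → Fin d → ℝ),
      (∀ ℓ i, f ℓ i ∈ Set.Icc (fL i) (fH i)) ∧ x = ∑ ℓ, σ ℓ • sinusoid N (f ℓ)) :
    (∀ (L : ℕ) (σ : Fin L → ℂ) (f : Fin L → Fin d → ℝ),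
      (∀ ℓ i, f ℓ i ∈ Set.Icc (fL i) (fH i)) →
      x = ∑ ℓ, σ ℓ • sinusoid N (f ℓ) →
      Feasible N fL fH x
        (fun p => ∑ ℓ, (‖σ ℓ‖ : ℂ) *
          ∏ i, Complex.exp (2 * (Real.pi : ℂ) * Complex.I * ((p i : ℤ) : ℂ) * ((f ℓ i : ℝ) : ℂ)))
        (∑ ℓ, ‖σ ℓ‖) ∧
      (1 / (2 * ((∏ i, N i : ℕ) : ℝ))) *
          ((toepT N (fun p => ∑ ℓ, (‖σ ℓ‖ : ℂ) *
            ∏ i, Complex.exp (2 * (Real.pi : ℂ) * Complex.I * ((p i : ℤ) : ℂ) *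
              ((f ℓ i : ℝ) : ℂ)))).trace).re
        + (∑ ℓ, ‖σ ℓ‖) / 2 = ∑ ℓ, ‖σ ℓ‖) ∧
    sInf { s : ℝ | ∃ (B : (Fin d → ℤ) → ℂ) (t : ℝ), Feasible N fL fH x B t ∧
        s = (1 / (2 * ((∏ i, N i : ℕ) : ℝ))) * ((toepT N B).trace).re + t / 2 }
      ≤ atomicNorm N (fun i => Set.Icc (fL i) (fH i)) x :=
  stmt10_general N hN fL fH hL0 hH1 x hx
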